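/- Let 𝒴 ⊂ ℝ be a finite set, let 𝒜, 𝒢₁, 𝒢₂, ℬ₂ be finite types, let p be a strictly positive probability mass function on 𝒴 × 𝒜 × 𝒢₁ × 𝒢₂ × ℬ₂, and fix a ∈ 𝒜. If G₂ ⊥ (A, G₁) | B₂ under p, then the influence function for the larger adjustment set is orthogonal to the difference: ∑_{(y,a′,g₁,g₂,b₂)} p(y,a′,g₁,g₂,b₂) · ψ_a^{G₁,(G₂,B₂)}(y,a′,g₁,g₂,b₂) · ( ψ_a^{G₁,B₂}(y,a′,g₁,b₂) − ψ_a^{G₁,(G₂,B₂)}(y,a′,g₁,g₂,b₂) ) = 0. -/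

import Mathlib

open Finset

noncomputable section

variable {Y : Finset ℝ} {A G₁ G₂ B₂ : Type}
variable [Fintype A] [Fintype G₁] [Fintype G₂] [Fintype B₂] [DecidableEq A]

/-- Marginal `p(g₁)`. -/
def pG1 (p : Y × A × G₁ × G₂ × B₂ → ℝ) (g₁ : G₁) : ℝ :=
  ∑ y : Y, ∑ a : A, ∑ g₂ : G₂, ∑ b₂ : B₂, p (y, a, g₁, g₂, b₂)

/-- Marginal `p(g₂)`. -/
def pG2 (p : Y × A × G₁ × G₂ × B₂ → ℝ) (g₂ : G₂) : ℝ :=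
  ∑ y : Y, ∑ a : A, ∑ g₁ : G₁, ∑ b₂ : B₂, p (y, a, g₁, g₂, b₂)

/-- Marginal `p(b₂)`. -/
def pB2 (p : Y × A × G₁ × G₂ × B₂ → ℝ) (b₂ : B₂) : ℝ :=
  ∑ y : Y, ∑ a : A, ∑ g₁ : G₁, ∑ g₂ : G₂, p (y, a, g₁, g₂, b₂)

/-- Marginal `p(g₂, b₂)`. -/
def pG2B2 (p : Y × A × G₁ × G₂ × B₂ → ℝ) (g₂ : G₂) (b₂ : B₂) : ℝ :=
  ∑ y : Y, ∑ a : A, ∑ g₁ : G₁, p (y, a, g₁, g₂, b₂)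

/-- Marginal `p(a, g₁, b₂)`. -/
def pAG1B2 (p : Y × A × G₁ × G₂ × B₂ → ℝ) (a : A) (g₁ : G₁) (b₂ : B₂) : ℝ :=
  ∑ y : Y, ∑ g₂ : G₂, p (y, a, g₁, g₂, b₂)

/-- Marginal `p(a, g₁, g₂, b₂)`. -/
def pAG1G2B2 (p : Y × A × G₁ × G₂ × B₂ → ℝ) (a : A) (g₁ : G₁) (g₂ : G₂) (b₂ : B₂) : ℝ :=
  ∑ y : Y, p (y, a, g₁, g₂, b₂)

/-- Marginal `p(a, g₁, g₂)`. -/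
def pAG1G2 (p : Y × A × G₁ × G₂ × B₂ → ℝ) (a : A) (g₁ : G₁) (g₂ : G₂) : ℝ :=
  ∑ y : Y, ∑ b₂ : B₂, p (y, a, g₁, g₂, b₂)

/-- Outcome regression `m₁(g₁,b₂) = ∑_y y·p(y | a, g₁, b₂)` for the
adjustment set `(G₁, B₂)`. -/
def m1 (p : Y × A × G₁ × G₂ × B₂ → ℝ) (a : A) (g₁ : G₁) (b₂ : B₂) : ℝ :=
  ∑ y : Y, (y : ℝ) * ((∑ g₂ : G₂, p (y, a, g₁, g₂, b₂)) / pAG1B2 p a g₁ b₂)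

/-- Outcome regression `m₂(g₁,g₂,b₂) = ∑_y y·p(y | a, g₁, g₂, b₂)` for the
adjustment set `(G₁, (G₂, B₂))`. -/
def m2 (p : Y × A × G₁ × G₂ × B₂ → ℝ) (a : A) (g₁ : G₁) (g₂ : G₂) (b₂ : B₂) : ℝ :=
  ∑ y : Y, (y : ℝ) * (p (y, a, g₁, g₂, b₂) / pAG1G2B2 p a g₁ g₂ b₂)

/-- Outcome regression `m₃(g₁,g₂) = ∑_y y·p(y | a, g₁, g₂)` for the
adjustment set `(G₁, G₂)`. -/
def m3 (p : Y × A × G₁ × G₂ × B₂ → ℝ) (a : A) (g₁ : G₁) (g₂ : G₂) : ℝ :=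
  ∑ y : Y, (y : ℝ) * ((∑ b₂ : B₂, p (y, a, g₁, g₂, b₂)) / pAG1G2 p a g₁ g₂)

/-- Target parameter for the adjustment set `(G₁, B₂)`. -/
def T1 (p : Y × A × G₁ × G₂ × B₂ → ℝ) (a : A) : ℝ :=
  ∑ g₁ : G₁, pG1 p g₁ * ∑ b₂ : B₂, pB2 p b₂ * m1 p a g₁ b₂

/-- Target parameter for the adjustment set `(G₁, (G₂, B₂))`. -/
def T2 (p : Y × A × G₁ × G₂ × B₂ → ℝ) (a : A) : ℝ :=
  ∑ g₁ : G₁, pG1 p g₁ * ∑ g₂ : G₂, ∑ b₂ : B₂, pG2B2 p g₂ b₂ * m2 p a g₁ g₂ b₂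

/-- Target parameter for the adjustment set `(G₁, G₂)`. -/
def T3 (p : Y × A × G₁ × G₂ × B₂ → ℝ) (a : A) : ℝ :=
  ∑ g₁ : G₁, pG1 p g₁ * ∑ g₂ : G₂, pG2 p g₂ * m3 p a g₁ g₂

/-- Influence function `ψ_a^{G₁,B₂}` for the adjustment set `(G₁, B₂)`. -/
def psi1 (p : Y × A × G₁ × G₂ × B₂ → ℝ) (a : A)
    (y : Y) (a' : A) (g₁ : G₁) (b₂ : B₂) : ℝ :=
  (if a' = a then (1 : ℝ) else 0) * (pG1 p g₁ * pB2 p b₂ / pAG1B2 p a g₁ b₂) *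
      ((y : ℝ) - m1 p a g₁ b₂)
    + (∑ b₂' : B₂, pB2 p b₂' * m1 p a g₁ b₂')
    + (∑ g₁' : G₁, pG1 p g₁' * m1 p a g₁' b₂)
    - 2 * T1 p a

/-- Influence function `ψ_a^{G₁,(G₂,B₂)}` for the adjustment set `(G₁, (G₂, B₂))`. -/
def psi2 (p : Y × A × G₁ × G₂ × B₂ → ℝ) (a : A)
    (y : Y) (a' : A) (g₁ : G₁) (g₂ : G₂) (b₂ : B₂) : ℝ :=
  (if a' = a then (1 : ℝ) else 0) *
      (pG1 p g₁ * pG2B2 p g₂ b₂ / pAG1G2B2 p a g₁ g₂ b₂) *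
      ((y : ℝ) - m2 p a g₁ g₂ b₂)
    + (∑ g₂' : G₂, ∑ b₂' : B₂, pG2B2 p g₂' b₂' * m2 p a g₁ g₂' b₂')
    + (∑ g₁' : G₁, pG1 p g₁' * m2 p a g₁' g₂ b₂)
    - 2 * T2 p a

/-- Influence function `ψ_a^{G₁,G₂}` for the adjustment set `(G₁, G₂)`. -/
def psi3 (p : Y × A × G₁ × G₂ × B₂ → ℝ) (a : A)
    (y : Y) (a' : A) (g₁ : G₁) (g₂ : G₂) : ℝ :=
  (if a' = a then (1 : ℝ) else 0) * (pG1 p g₁ * pG2 p g₂ / pAG1G2 p a g₁ g₂) *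
      ((y : ℝ) - m3 p a g₁ g₂)
    + (∑ g₂' : G₂, pG2 p g₂' * m3 p a g₁ g₂')
    + (∑ g₁' : G₁, pG1 p g₁' * m3 p a g₁' g₂)
    - 2 * T3 p a

/-- Conditional independence `G₂ ⊥ (A, G₁) | B₂` under `p`. -/
def CI_G2_AG1_B2 (p : Y × A × G₁ × G₂ × B₂ → ℝ) : Prop :=
  ∀ (g₂ : G₂) (a : A) (g₁ : G₁) (b₂ : B₂),
    (∑ y : Y, p (y, a, g₁, g₂, b₂)) / pB2 p b₂ =
      (pG2B2 p g₂ b₂ / pB2 p b₂) * (pAG1B2 p a g₁ b₂ / pB2 p b₂)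

/-- Conditional independence `Y ⊥ B₂ | (A, G₁, G₂)` under `p`. -/
def CI_Y_B2_AG1G2 (p : Y × A × G₁ × G₂ × B₂ → ℝ) : Prop :=
  ∀ (y : Y) (a : A) (g₁ : G₁) (g₂ : G₂) (b₂ : B₂),
    p (y, a, g₁, g₂, b₂) / pAG1G2 p a g₁ g₂ =
      ((∑ b₂' : B₂, p (y, a, g₁, g₂, b₂')) / pAG1G2 p a g₁ g₂) *
        (pAG1G2B2 p a g₁ g₂ b₂ / pAG1G2 p a g₁ g₂)

/-- Variance of a real function of the observation under `p`. -/
def VarP (p : Y × A × G₁ × G₂ × B₂ → ℝ) (f : Y × A × G₁ × G₂ × B₂ → ℝ) : ℝ :=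
  (∑ o : Y × A × G₁ × G₂ × B₂, p o * f o ^ 2) -
    (∑ o : Y × A × G₁ × G₂ × B₂, p o * f o) ^ 2

end

/-!
Conditional independence `G₂ ⊥ (A, G₁) | B₂` means
`p(a, g₁, g₂, b₂) p(b₂) = p(g₂, b₂) p(a, g₁, b₂)`.
Hence the inverse-probability weights of `ψ₁` and `ψ₂` coincide, `m₁(g₁, b₂)` is the
`p(g₂ | b₂)`-average of `m₂(g₁, g₂, b₂)` and `T₁ = T₂`, so `ψ₁ − ψ₂` does not depend on `y`.
Summing out `y` then kills the residual part `y − m₂` of `ψ₂`, and summing out `a'` leaves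
`∑ (c(g₁) + d(g₂, b₂)) E(g₁, g₂, b₂)`, where the sums of `E` over `g₁` and over `g₂` both vanish.
-/

theorem Finset.sum_mul_sub_sum_mul_div_eq_zero {ι K : Type*} [Field K] (s : Finset ι)
    (w f : ι → K) (hw : ∑ i ∈ s, w i ≠ 0) :
    ∑ i ∈ s, w i * (f i - ∑ j ∈ s, f j * (w j / ∑ k ∈ s, w k)) = 0 := by
  simp only [mul_sub, sum_sub_distrib, ← sum_mul, ← mul_div_assoc, ← sum_div]
  field_simp
  simp only [mul_comm, sub_self]

theorem Finset.sum_sum_sum_add_mul_eq_zero {α β γ R : Type*} [NonUnitalNonAssocSemiring R]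
    (s : Finset α) (t : Finset β) (u : Finset γ) (c : α → R) (d : β → γ → R)
    (h : α → β → γ → R) (hβ : ∀ x z, ∑ y ∈ t, h x y z = 0) (hα : ∀ y z, ∑ x ∈ s, h x y z = 0) :
    ∑ x ∈ s, ∑ y ∈ t, ∑ z ∈ u, (c x + d y z) * h x y z = 0 := by
  simp only [add_mul, sum_add_distrib]
  have hc : ∑ x ∈ s, ∑ y ∈ t, ∑ z ∈ u, c x * h x y z = 0 := by
    refine sum_eq_zero fun x _ => ?_
    rw [sum_comm]
    exact sum_eq_zero fun z _ => by rw [← mul_sum, hβ, mul_zero]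
  have hd : ∑ x ∈ s, ∑ y ∈ t, ∑ z ∈ u, d y z * h x y z = 0 := by
    rw [sum_comm]
    refine sum_eq_zero fun y _ => ?_
    rw [sum_comm]
    exact sum_eq_zero fun z _ => by rw [← mul_sum, hα, mul_zero]
  rw [hc, hd, add_zero]

variable {Y : Finset ℝ} {A G₁ G₂ B₂ : Type}

theorem pAG1G2B2_pos [Nonempty Y] {p : Y × A × G₁ × G₂ × B₂ → ℝ} (hpos : ∀ o, 0 < p o) (a : A)
    (g₁ : G₁) (g₂ : G₂) (b₂ : B₂) : 0 < pAG1G2B2 p a g₁ g₂ b₂ :=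
  sum_pos (fun _ _ => hpos _) univ_nonempty

theorem pAG1B2_pos [Fintype G₂] [Nonempty Y] [Nonempty G₂] {p : Y × A × G₁ × G₂ × B₂ → ℝ}
    (hpos : ∀ o, 0 < p o) (a : A) (g₁ : G₁) (b₂ : B₂) : 0 < pAG1B2 p a g₁ b₂ :=
  sum_pos (fun _ _ => sum_pos (fun _ _ => hpos _) univ_nonempty) univ_nonempty

variable [Fintype A] [Fintype G₁] [Fintype G₂]

theorem pB2_pos [Nonempty Y] [Nonempty A] [Nonempty G₁] [Nonempty G₂]
    {p : Y × A × G₁ × G₂ × B₂ → ℝ} (hpos : ∀ o, 0 < p o) (b₂ : B₂) : 0 < pB2 p b₂ :=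
  sum_pos (fun _ _ => sum_pos (fun _ _ => sum_pos (fun _ _ => sum_pos (fun _ _ => hpos _)
    univ_nonempty) univ_nonempty) univ_nonempty) univ_nonempty

theorem sum_pG2B2 (p : Y × A × G₁ × G₂ × B₂ → ℝ) (b₂ : B₂) :
    ∑ g₂, pG2B2 p g₂ b₂ = pB2 p b₂ := by
  simp only [pG2B2, pB2]
  rw [sum_comm]
  refine sum_congr rfl fun y _ => ?_
  rw [sum_comm]
  exact sum_congr rfl fun a _ => sum_comm

theorem sum_sum_pAG1B2 (p : Y × A × G₁ × G₂ × B₂ → ℝ) (b₂ : B₂) :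
    ∑ g₁, ∑ a, pAG1B2 p a g₁ b₂ = pB2 p b₂ := by
  simp only [pAG1B2, pB2]
  rw [sum_comm, sum_congr rfl fun a _ => sum_comm, sum_comm]

namespace CI_G2_AG1_B2

variable {p : Y × A × G₁ × G₂ × B₂ → ℝ}

theorem pAG1G2B2_mul_pB2 (hCI : CI_G2_AG1_B2 p) {b₂ : B₂} (hb₂ : pB2 p b₂ ≠ 0) (a : A)
    (g₁ : G₁) (g₂ : G₂) :
    pAG1G2B2 p a g₁ g₂ b₂ * pB2 p b₂ = pG2B2 p g₂ b₂ * pAG1B2 p a g₁ b₂ := by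
  have h : pAG1G2B2 p a g₁ g₂ b₂ / pB2 p b₂ =
      (pG2B2 p g₂ b₂ / pB2 p b₂) * (pAG1B2 p a g₁ b₂ / pB2 p b₂) := hCI g₂ a g₁ b₂
  rw [div_mul_div_comm, div_eq_div_iff hb₂ (mul_ne_zero hb₂ hb₂)] at h
  exact mul_right_cancel₀ hb₂ (by linear_combination h)

variable [Nonempty Y] [Nonempty A] [Nonempty G₁] [Nonempty G₂]

theorem pG2B2_div_pAG1G2B2 (hCI : CI_G2_AG1_B2 p) (hpos : ∀ o, 0 < p o) (a : A) (g₁ : G₁)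
    (g₂ : G₂) (b₂ : B₂) :
    pG2B2 p g₂ b₂ / pAG1G2B2 p a g₁ g₂ b₂ = pB2 p b₂ / pAG1B2 p a g₁ b₂ := by
  rw [div_eq_div_iff (pAG1G2B2_pos hpos a g₁ g₂ b₂).ne' (pAG1B2_pos hpos a g₁ b₂).ne']
  linear_combination -hCI.pAG1G2B2_mul_pB2 (pB2_pos hpos b₂).ne' a g₁ g₂

theorem sum_pG2B2_mul_m2 (hCI : CI_G2_AG1_B2 p) (hpos : ∀ o, 0 < p o) (a : A) (g₁ : G₁)
    (b₂ : B₂) : ∑ g₂, pG2B2 p g₂ b₂ * m2 p a g₁ g₂ b₂ = pB2 p b₂ * m1 p a g₁ b₂ := by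
  simp only [m2, m1, mul_sum, sum_div]
  rw [sum_comm]
  refine sum_congr rfl fun y _ => sum_congr rfl fun g₂ _ => ?_
  calc pG2B2 p g₂ b₂ * ((y : ℝ) * (p (y, a, g₁, g₂, b₂) / pAG1G2B2 p a g₁ g₂ b₂))
      = y * p (y, a, g₁, g₂, b₂) * (pG2B2 p g₂ b₂ / pAG1G2B2 p a g₁ g₂ b₂) := by ring
    _ = y * p (y, a, g₁, g₂, b₂) * (pB2 p b₂ / pAG1B2 p a g₁ b₂) := by
        rw [hCI.pG2B2_div_pAG1G2B2 hpos]
    _ = pB2 p b₂ * ((y : ℝ) * (p (y, a, g₁, g₂, b₂) / pAG1B2 p a g₁ b₂)) := by ring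

theorem sum_pG2B2_mul_sub_m1 (hCI : CI_G2_AG1_B2 p) (hpos : ∀ o, 0 < p o) (a : A) (g₁ : G₁)
    (b₂ : B₂) : ∑ g₂, pG2B2 p g₂ b₂ * (m2 p a g₁ g₂ b₂ - m1 p a g₁ b₂) = 0 := by
  simp only [mul_sub, sum_sub_distrib, ← sum_mul, hCI.sum_pG2B2_mul_m2 hpos, sum_pG2B2, sub_self]

theorem sum_pAG1G2B2 (hCI : CI_G2_AG1_B2 p) (hpos : ∀ o, 0 < p o) (g₁ : G₁) (g₂ : G₂)
    (b₂ : B₂) :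
    ∑ a, pAG1G2B2 p a g₁ g₂ b₂ = (∑ a, pAG1B2 p a g₁ b₂) / pB2 p b₂ * pG2B2 p g₂ b₂ := by
  rw [div_mul_eq_mul_div, eq_div_iff (pB2_pos hpos b₂).ne', sum_mul, sum_mul]
  exact sum_congr rfl fun a _ => by
    rw [hCI.pAG1G2B2_mul_pB2 (pB2_pos hpos b₂).ne' a g₁ g₂, mul_comm]

end CI_G2_AG1_B2

variable [Fintype B₂]

section Averages

variable (p : Y × A × G₁ × G₂ × B₂ → ℝ) (a : A)

noncomputable def m2AvgG2B2 (g₁ : G₁) : ℝ :=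
  ∑ g₂ : G₂, ∑ b₂ : B₂, pG2B2 p g₂ b₂ * m2 p a g₁ g₂ b₂

noncomputable def m2AvgG1 (g₂ : G₂) (b₂ : B₂) : ℝ :=
  ∑ g₁ : G₁, pG1 p g₁ * m2 p a g₁ g₂ b₂

noncomputable def regDiffAvgG1 (g₂ : G₂) (b₂ : B₂) : ℝ :=
  ∑ g₁ : G₁, pG1 p g₁ * (m2 p a g₁ g₂ b₂ - m1 p a g₁ b₂)

end Averages

namespace CI_G2_AG1_B2

variable {p : Y × A × G₁ × G₂ × B₂ → ℝ} [Nonempty Y] [Nonempty A] [Nonempty G₁] [Nonempty G₂]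

theorem sum_pG2B2_mul_regDiffAvgG1 (hCI : CI_G2_AG1_B2 p) (hpos : ∀ o, 0 < p o) (a : A)
    (b₂ : B₂) : ∑ g₂, pG2B2 p g₂ b₂ * regDiffAvgG1 p a g₂ b₂ = 0 := by
  simp only [regDiffAvgG1, mul_sum]
  rw [sum_comm]
  refine sum_eq_zero fun g₁ _ => ?_
  simp only [mul_left_comm (pG2B2 p _ b₂), ← mul_sum, hCI.sum_pG2B2_mul_sub_m1 hpos, mul_zero]

theorem m2AvgG2B2_eq (hCI : CI_G2_AG1_B2 p) (hpos : ∀ o, 0 < p o) (a : A) (g₁ : G₁) :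
    m2AvgG2B2 p a g₁ = ∑ b₂, pB2 p b₂ * m1 p a g₁ b₂ := by
  rw [m2AvgG2B2, sum_comm]
  exact sum_congr rfl fun b₂ _ => hCI.sum_pG2B2_mul_m2 hpos a g₁ b₂

theorem T1_eq_T2 (hCI : CI_G2_AG1_B2 p) (hpos : ∀ o, 0 < p o) (a : A) : T1 p a = T2 p a :=
  sum_congr rfl fun g₁ _ => congrArg _ (hCI.m2AvgG2B2_eq hpos a g₁).symm

end CI_G2_AG1_B2

variable [DecidableEq A]

section InfluenceFunctions

variable (p : Y × A × G₁ × G₂ × B₂ → ℝ) (a : A)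

noncomputable def psiDiff (a' : A) (g₁ : G₁) (g₂ : G₂) (b₂ : B₂) : ℝ :=
  (if a' = a then (1 : ℝ) else 0) * (pG1 p g₁ * pG2B2 p g₂ b₂ / pAG1G2B2 p a g₁ g₂ b₂) *
      (m2 p a g₁ g₂ b₂ - m1 p a g₁ b₂)
    - regDiffAvgG1 p a g₂ b₂

noncomputable def weightedPsiDiff (g₁ : G₁) (g₂ : G₂) (b₂ : B₂) : ℝ :=
  ∑ a' : A, pAG1G2B2 p a' g₁ g₂ b₂ * psiDiff p a a' g₁ g₂ b₂

theorem psi2_eq (y : Y) (a' : A) (g₁ : G₁) (g₂ : G₂) (b₂ : B₂) :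
    psi2 p a y a' g₁ g₂ b₂ =
      (if a' = a then (1 : ℝ) else 0) * (pG1 p g₁ * pG2B2 p g₂ b₂ / pAG1G2B2 p a g₁ g₂ b₂) *
          ((y : ℝ) - m2 p a g₁ g₂ b₂)
        + (m2AvgG2B2 p a g₁ - 2 * T2 p a + m2AvgG1 p a g₂ b₂) := by
  rw [psi2, m2AvgG2B2, m2AvgG1]
  ring

variable {p} [Nonempty Y]

theorem sum_mul_psi2 (hpos : ∀ o, 0 < p o) (a' : A) (g₁ : G₁) (g₂ : G₂) (b₂ : B₂) :
    ∑ y : Y, p (y, a', g₁, g₂, b₂) * psi2 p a y a' g₁ g₂ b₂ =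
      (m2AvgG2B2 p a g₁ - 2 * T2 p a + m2AvgG1 p a g₂ b₂) * pAG1G2B2 p a' g₁ g₂ b₂ := by
  have hres : (if a' = a then (1 : ℝ) else 0) *
      ∑ y : Y, p (y, a', g₁, g₂, b₂) * ((y : ℝ) - m2 p a g₁ g₂ b₂) = 0 := by
    split_ifs with ha'
    · subst ha'
      rw [one_mul]
      exact sum_mul_sub_sum_mul_div_eq_zero _ _ _ (pAG1G2B2_pos hpos a' g₁ g₂ b₂).ne'
    · rw [zero_mul]
  calc ∑ y : Y, p (y, a', g₁, g₂, b₂) * psi2 p a y a' g₁ g₂ b₂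
      = (if a' = a then (1 : ℝ) else 0) *
            (∑ y : Y, p (y, a', g₁, g₂, b₂) * ((y : ℝ) - m2 p a g₁ g₂ b₂)) *
            (pG1 p g₁ * pG2B2 p g₂ b₂ / pAG1G2B2 p a g₁ g₂ b₂)
          + (m2AvgG2B2 p a g₁ - 2 * T2 p a + m2AvgG1 p a g₂ b₂) *
              ∑ y : Y, p (y, a', g₁, g₂, b₂) := by
        simp only [psi2_eq, mul_sum, sum_mul, ← sum_add_distrib]
        exact sum_congr rfl fun y _ => by ring
    _ = _ := by rw [hres, zero_mul, zero_add]; rfl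

theorem weightedPsiDiff_eq (hpos : ∀ o, 0 < p o) (g₁ : G₁) (g₂ : G₂) (b₂ : B₂) :
    weightedPsiDiff p a g₁ g₂ b₂ =
      pG1 p g₁ * pG2B2 p g₂ b₂ * (m2 p a g₁ g₂ b₂ - m1 p a g₁ b₂)
        - (∑ a' : A, pAG1G2B2 p a' g₁ g₂ b₂) * regDiffAvgG1 p a g₂ b₂ := by
  have ha := (pAG1G2B2_pos hpos a g₁ g₂ b₂).ne'
  simp only [weightedPsiDiff, psiDiff, mul_sub, sum_sub_distrib, ← sum_mul, ite_mul, one_mul,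
    zero_mul, mul_ite, mul_zero, sum_ite_eq', mem_univ, if_true, sub_left_inj]
  field_simp

end InfluenceFunctions

namespace CI_G2_AG1_B2

variable {p : Y × A × G₁ × G₂ × B₂ → ℝ} [Nonempty Y] [Nonempty A] [Nonempty G₁] [Nonempty G₂]

theorem psi1_sub_psi2 (hCI : CI_G2_AG1_B2 p) (hpos : ∀ o, 0 < p o) (a : A) (y : Y) (a' : A)
    (g₁ : G₁) (g₂ : G₂) (b₂ : B₂) :
    psi1 p a y a' g₁ b₂ - psi2 p a y a' g₁ g₂ b₂ = psiDiff p a a' g₁ g₂ b₂ := by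
  have hweight : pG1 p g₁ * pB2 p b₂ / pAG1B2 p a g₁ b₂ =
      pG1 p g₁ * pG2B2 p g₂ b₂ / pAG1G2B2 p a g₁ g₂ b₂ := by
    rw [mul_div_assoc, mul_div_assoc, hCI.pG2B2_div_pAG1G2B2 hpos]
  rw [psi1, psi2_eq, psiDiff, regDiffAvgG1, hweight, ← hCI.m2AvgG2B2_eq hpos, hCI.T1_eq_T2 hpos,
    m2AvgG1]
  simp only [mul_sub, sum_sub_distrib]
  ring

theorem sum_weightedPsiDiff_g₂ (hCI : CI_G2_AG1_B2 p) (hpos : ∀ o, 0 < p o) (a : A)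
    (g₁ : G₁) (b₂ : B₂) : ∑ g₂, weightedPsiDiff p a g₁ g₂ b₂ = 0 := by
  simp only [weightedPsiDiff_eq a hpos, hCI.sum_pAG1G2B2 hpos, sum_sub_distrib, mul_assoc,
    ← mul_sum, hCI.sum_pG2B2_mul_sub_m1 hpos, hCI.sum_pG2B2_mul_regDiffAvgG1 hpos, mul_zero,
    sub_self]

theorem sum_weightedPsiDiff_g₁ (hCI : CI_G2_AG1_B2 p) (hpos : ∀ o, 0 < p o) (a : A)
    (g₂ : G₂) (b₂ : B₂) : ∑ g₁, weightedPsiDiff p a g₁ g₂ b₂ = 0 := by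
  have hcond : ∑ g₁, (∑ a, pAG1B2 p a g₁ b₂) / pB2 p b₂ = 1 := by
    rw [← sum_div, sum_sum_pAG1B2, div_self (pB2_pos hpos b₂).ne']
  simp only [weightedPsiDiff_eq a hpos, hCI.sum_pAG1G2B2 hpos, sum_sub_distrib]
  rw [← sum_mul, ← sum_mul, hcond, one_mul, regDiffAvgG1, mul_sum]
  exact sub_eq_zero.2 (sum_congr rfl fun g₁ _ => by ring)

end CI_G2_AG1_B2

theorem psi_orthogonality_general
    (p : Y × A × G₁ × G₂ × B₂ → ℝ)
    (hpos : ∀ o, 0 < p o) (a : A)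
    (hCI : CI_G2_AG1_B2 p) :
    ∑ y : Y, ∑ a' : A, ∑ g₁ : G₁, ∑ g₂ : G₂, ∑ b₂ : B₂,
      p (y, a', g₁, g₂, b₂) * psi2 p a y a' g₁ g₂ b₂ *
        (psi1 p a y a' g₁ b₂ - psi2 p a y a' g₁ g₂ b₂) = 0 := by
  rcases isEmpty_or_nonempty (Y × A × G₁ × G₂ × B₂) with hempty | ⟨⟨y₀, a₀, g₁₀, g₂₀, -⟩⟩
  · simp only [isEmpty_prod] at hempty
    rcases hempty with _ | _ | _ | _ | _ <;> simp
  have : Nonempty Y := ⟨y₀⟩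
  have : Nonempty A := ⟨a₀⟩
  have : Nonempty G₁ := ⟨g₁₀⟩
  have : Nonempty G₂ := ⟨g₂₀⟩
  calc _ = ∑ g₁, ∑ g₂, ∑ b₂, (m2AvgG2B2 p a g₁ - 2 * T2 p a + m2AvgG1 p a g₂ b₂) *
          weightedPsiDiff p a g₁ g₂ b₂ := by
        simp only [hCI.psi1_sub_psi2 hpos]
        simp_rw [sum_comm (s := (univ : Finset Y))]
        simp only [← sum_mul, sum_mul_psi2 a hpos]
        simp_rw [sum_comm (s := (univ : Finset A)), mul_assoc, ← mul_sum]
        rfl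
    _ = 0 := sum_sum_sum_add_mul_eq_zero _ _ _ _ _ _ (hCI.sum_weightedPsiDiff_g₂ hpos a)
      (hCI.sum_weightedPsiDiff_g₁ hpos a)

/-- Key orthogonality in the proof of Lemma 4.1: under
`G₂ ⊥ (A, G₁) | B₂`, the influence function for the larger adjustment
set is orthogonal to the difference of the two influence functions. -/
theorem psi_orthogonality
    (p : Y × A × G₁ × G₂ × B₂ → ℝ)
    (hpos : ∀ o, 0 < p o) (hsum : ∑ o, p o = 1) (a : A)
    (hCI : CI_G2_AG1_B2 p) :
    ∑ y : Y, ∑ a' : A, ∑ g₁ : G₁, ∑ g₂ : G₂, ∑ b₂ : B₂,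
      p (y, a', g₁, g₂, b₂) * psi2 p a y a' g₁ g₂ b₂ *
        (psi1 p a y a' g₁ b₂ - psi2 p a y a' g₁ g₂ b₂) = 0 :=
  psi_orthogonality_general p hpos a hCI
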